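/- Let k ≥ 2, let (S,*) be a ℤ₂-irreducible k-cycle, and let X ⊆ V(S) be an inclusion-minimal *-invariant vertex separator of G(S) with |X| ≤ 2k. Then either S = T ⊔ T* (the multiset sum) for some simplicial k-circuit T with V(T) ∩ V(T*) = X, or |X| = 2k and the subgraph of G(S) induced by X is isomorphic to G(B_{k−1}). -/

import Mathlib

open Matrix

/-! ### Frameworks and infinitesimal rigidity -/

/-- An infinitesimal motion of the framework given by the graph `G` restricted to the
vertex set `W`, realised by `p` in `ℝ^d`. -/
def IsMotion {V : Type*} (d : ℕ) (G : SimpleGraph V) (W : Set V)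
    (p q : V → Fin d → ℝ) : Prop :=
  ∀ u ∈ W, ∀ v ∈ W, G.Adj u v → (p u - p v) ⬝ᵥ (q u - q v) = 0

/-- A trivial infinitesimal motion: `q = S ∘ p + c` on `W` for a skew-symmetric `S`. -/
def IsTrivialMotion {V : Type*} (d : ℕ) (W : Set V) (p q : V → Fin d → ℝ) : Prop :=
  ∃ (S : Matrix (Fin d) (Fin d) ℝ) (c : Fin d → ℝ), Sᵀ = -S ∧ ∀ u ∈ W, q u = S *ᵥ p u + c

/-- The framework on vertex set `W` with edges those of `G` inside `W`, realised by `p`,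
is infinitesimally rigid. -/
def IsInfRigid {V : Type*} (d : ℕ) (G : SimpleGraph V) (W : Set V)
    (p : V → Fin d → ℝ) : Prop :=
  ∀ q : V → Fin d → ℝ, IsMotion d G W p q → IsTrivialMotion d W p q

/-- `σ` is a free involution on `X`, i.e. a vertex pairing on `X`. -/
structure IsVertexPairing {V : Type*} (X : Set V) (σ : V → V) : Prop where
  mapsTo : ∀ x ∈ X, σ x ∈ X
  invol : ∀ x ∈ X, σ (σ x) = x
  free : ∀ x ∈ X, σ x ≠ x

/-- A non-adjacent vertex pairing of the graph `G`. -/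
def IsNonAdjPairing {V : Type*} (G : SimpleGraph V) (X : Set V) (σ : V → V) : Prop :=
  IsVertexPairing X σ ∧ ∀ x ∈ X, ¬ G.Adj x (σ x)

/-- `(G, σ)` is a `ℤ₂`-symmetric graph: `σ` is a free involutive automorphism of `G`
with `u (σ u)` never an edge. -/
def IsZ2SymGraph {V : Type*} (G : SimpleGraph V) (σ : V → V) : Prop :=
  (∀ x, σ (σ x) = x) ∧ (∀ x, σ x ≠ x) ∧ (∀ u v, G.Adj u v ↔ G.Adj (σ u) (σ v)) ∧
    ∀ x, ¬ G.Adj x (σ x)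

/-- `γ` generates a point group of `ℝ^d` of order two: it is orthogonal, an involution
and not the identity. -/
def IsPointGroupInvolution {d : ℕ} (γ : Matrix (Fin d) (Fin d) ℝ) : Prop :=
  γᵀ * γ = 1 ∧ γ * γ = 1 ∧ γ ≠ 1

/-- The diagonal matrix `I_{t,d}` whose first `t` diagonal entries are `1` and whose
remaining `d - t` diagonal entries are `-1`; it generates the point group `Γ_{t,d}`. -/
def Itd (t d : ℕ) : Matrix (Fin d) (Fin d) ℝ :=
  Matrix.diagonal fun i => if (i : ℕ) < t then (1 : ℝ) else -1

/-- `p` is `Γ`-symmetric with respect to the vertex pairing `σ : X → X`, where `Γ` is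
generated by `γ`. -/
def IsGammaSym {V : Type*} {d : ℕ} (X : Set V) (σ : V → V)
    (γ : Matrix (Fin d) (Fin d) ℝ) (p : V → Fin d → ℝ) : Prop :=
  ∀ x ∈ X, p (σ x) = γ *ᵥ p x

/-- `(G|_W, σ)` is `Γ`-rigid in `ℝ^d`, where `Γ` is the point group generated by `γ`:
some `Γ`-symmetric realisation is infinitesimally rigid. -/
def GammaRigid {V : Type*} (d : ℕ) (G : SimpleGraph V) (W X : Set V) (σ : V → V)
    (γ : Matrix (Fin d) (Fin d) ℝ) : Prop :=
  ∃ p : V → Fin d → ℝ, IsGammaSym X σ γ p ∧ IsInfRigid d G W p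

/-- The set `X_W = (X ∩ W) ∩ (X ∩ W)*`. -/
def pairedPart {V : Type*} (X : Set V) (σ : V → V) (W : Set V) : Set V :=
  (X ∩ W) ∩ (σ '' (X ∩ W))

/-- The simple graph `G/uv` obtained from `G` by contracting `v` onto `u`. -/
def contractEdge {V : Type*} (G : SimpleGraph V) (u v : V) : SimpleGraph V :=
  SimpleGraph.fromRel fun a b =>
    a ≠ v ∧ b ≠ v ∧ (G.Adj a b ∨ (a = u ∧ G.Adj v b) ∨ (b = u ∧ G.Adj a v))

/-- The row of the rigidity matrix indexed by an (unordered) edge `e`, viewed as the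
linear functional `q ↦ (p u - p v) ⬝ᵥ (q u - q v)`. -/
def rigidityRow {V : Type*} (d : ℕ) (p : V → Fin d → ℝ) (e : Sym2 V)
    (q : V → Fin d → ℝ) : ℝ :=
  Sym2.lift ⟨fun u v => (p u - p v) ⬝ᵥ (q u - q v), fun u v => by
    show (p u - p v) ⬝ᵥ (q u - q v) = (p v - p u) ⬝ᵥ (q v - q u)
    rw [show p u - p v = -(p v - p u) from (neg_sub _ _).symm,
      show q u - q v = -(q v - q u) from (neg_sub _ _).symm,
      _root_.neg_dotProduct, _root_.dotProduct_neg, neg_neg]⟩ e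

/-- The rigidity matrix `R(G,p)` is row-independent. -/
def RowIndependent {V : Type*} (d : ℕ) (G : SimpleGraph V) (p : V → Fin d → ℝ) : Prop :=
  LinearIndependent ℝ fun e : G.edgeSet => rigidityRow d p e.1

/-- The graph obtained from `G` by splitting `u'` from `u` along `C₁` (deleting `D₁`)
and then splitting `v'` from `v` along `C₂` (deleting `D₂`).  The new vertices are
`u' = Sum.inr 0` and `v' = Sum.inr 1`. -/
def doubleSplit {V : Type*} (G : SimpleGraph V) (u v : V) (C₁ D₁ C₂ D₂ : Set V) :
    SimpleGraph (V ⊕ Fin 2) :=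
  SimpleGraph.fromRel fun a b =>
    (∃ s t : V, a = Sum.inl s ∧ b = Sum.inl t ∧ G.Adj s t ∧
        ¬(s = u ∧ t ∈ D₁) ∧ ¬(t = u ∧ s ∈ D₁) ∧ ¬(s = v ∧ t ∈ D₂) ∧ ¬(t = v ∧ s ∈ D₂)) ∨
    (∃ z : V, a = Sum.inr 0 ∧ b = Sum.inl z ∧ (z ∈ C₁ ∪ D₁ ∨ z = u)) ∨
    (∃ z : V, a = Sum.inr 1 ∧ b = Sum.inl z ∧ (z ∈ C₂ ∪ D₂ ∨ z = v))

/-! ### Simplicial multicomplexes -/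

/-- The vertex set `V(S)` of a simplicial multicomplex. -/
def complexVerts {V : Type*} [DecidableEq V] (S : Multiset (Finset V)) : Finset V :=
  S.toFinset.sup id

/-- The edge set `E(S)`: all 2-element subsets of facets. -/
def complexEdges {V : Type*} [DecidableEq V] (S : Multiset (Finset V)) :
    Finset (Finset V) :=
  S.toFinset.biUnion fun F => Finset.powersetCard 2 F

/-- Adjacency in the graph `G(S)` of a simplicial multicomplex. -/
def complexAdj {V : Type*} (S : Multiset (Finset V)) (a b : V) : Prop :=
  a ≠ b ∧ ∃ F ∈ S, a ∈ F ∧ b ∈ F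

/-- The graph `G(S)` of a simplicial multicomplex. -/
def complexGraph {V : Type*} (S : Multiset (Finset V)) : SimpleGraph V :=
  SimpleGraph.fromRel fun a b => ∃ F ∈ S, a ∈ F ∧ b ∈ F

/-- A simplicial `k`-multicomplex: a multiset of `(k+1)`-element sets. -/
def IsMultiComplex {V : Type*} (k : ℕ) (S : Multiset (Finset V)) : Prop :=
  ∀ F ∈ S, F.card = k + 1

/-- `F` belongs to the boundary `∂S`: it is a `k`-set contained in an odd number of
facets of `S`, counted with multiplicity. -/
def inBoundary {V : Type*} [DecidableEq V] (k : ℕ) (S : Multiset (Finset V))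
    (F : Finset V) : Prop :=
  F.card = k ∧ (S.countP fun U => F ⊆ U) % 2 = 1

instance {V : Type*} [DecidableEq V] (k : ℕ) (S : Multiset (Finset V)) (F : Finset V) :
    Decidable (inBoundary k S F) :=
  inferInstanceAs (Decidable (_ ∧ _))

/-- A simplicial `k`-cycle: a `k`-multicomplex with empty boundary. -/
def IsSimplicialCycle {V : Type*} [DecidableEq V] (k : ℕ)
    (S : Multiset (Finset V)) : Prop :=
  IsMultiComplex k S ∧ ∀ F : Finset V, ¬ inBoundary k S F

/-- A simplicial `k`-circuit: a nonempty simplicial `k`-cycle, no nonempty proper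
sub-multiset of which is a simplicial `k`-cycle. -/
def IsSimplicialCircuit {V : Type*} [DecidableEq V] (k : ℕ)
    (S : Multiset (Finset V)) : Prop :=
  IsSimplicialCycle k S ∧ S ≠ 0 ∧
    ∀ T : Multiset (Finset V), T ≤ S → T ≠ 0 → T ≠ S → ¬ IsSimplicialCycle k T

/-- A trivial simplicial `k`-circuit: two copies of a single `(k+1)`-set. -/
def IsTrivialCircuit {V : Type*} (S : Multiset (Finset V)) : Prop :=
  ∃ F : Finset V, S = {F, F}

/-- The image multiset `T* = {F* : F ∈ T}` of a multicomplex under a vertex map. -/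
def starM {V W : Type*} [DecidableEq W] (f : V → W) (T : Multiset (Finset V)) :
    Multiset (Finset W) :=
  T.map (Finset.image f)

/-- `σ` is a free simplicial involution of the multicomplex `S`. -/
def IsFreeSimplicialInvolution {V : Type*} [DecidableEq V] (S : Multiset (Finset V))
    (σ : V → V) : Prop :=
  (∀ v ∈ complexVerts S, σ (σ v) = v) ∧ starM σ S = S ∧
    ∀ F : Finset V, F.Nonempty → (∃ U ∈ S, F ⊆ U) → F.image σ ≠ F

/-- A `ℤ₂`-symmetric `k`-cycle. -/
def IsZ2SymCycle {V : Type*} [DecidableEq V] (k : ℕ) (S : Multiset (Finset V))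
    (σ : V → V) : Prop :=
  IsSimplicialCycle k S ∧ IsFreeSimplicialInvolution S σ

/-- A `ℤ₂`-irreducible `k`-cycle: a nonempty `ℤ₂`-symmetric `k`-cycle, no nonempty
proper `σ`-invariant sub-multiset of which is a simplicial `k`-cycle. -/
def IsZ2IrreducibleCycle {V : Type*} [DecidableEq V] (k : ℕ) (S : Multiset (Finset V))
    (σ : V → V) : Prop :=
  IsZ2SymCycle k S σ ∧ S ≠ 0 ∧
    ∀ T : Multiset (Finset V), T ≤ S → T ≠ 0 → T ≠ S → starM σ T = T →
      ¬ IsSimplicialCycle k T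

/-- A trivial `ℤ₂`-irreducible `k`-cycle: two vertex-disjoint trivial simplicial
`k`-circuits interchanged by `σ`. -/
def IsTrivialZ2Irreducible {V : Type*} [DecidableEq V] (S : Multiset (Finset V))
    (σ : V → V) : Prop :=
  ∃ F : Finset V, S = {F, F, F.image σ, F.image σ} ∧ Disjoint F (F.image σ)

/-- The contraction `S/uv` of the multicomplex `S` (contracting `v` onto `u`). -/
def contractC {V : Type*} [DecidableEq V] (S : Multiset (Finset V)) (u v : V) :
    Multiset (Finset V) :=
  (S.filter fun U => ¬(u ∈ U ∧ v ∈ U)).map fun U =>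
    if v ∈ U then insert u (U.erase v) else U

/-- The canonical bijection `γ` from `Ast({x,y}) ∩ Ast({x*,y*})` to `(S/xy)/x*y*`,
as a map on facets. -/
def gammaFun {V : Type*} [DecidableEq V] (x y : V) (σ : V → V) (U : Finset V) :
    Finset V :=
  if y ∈ U then insert x (U.erase y)
  else if σ y ∈ U then insert (σ x) (U.erase (σ y)) else U

/-- `Ast({x,y}) ∩ Ast({x*,y*})`: the facets of `S` containing neither `{x,y}` nor
`{x*,y*}`. -/
def doubleAst {V : Type*} [DecidableEq V] (S : Multiset (Finset V)) (x y : V)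
    (σ : V → V) : Multiset (Finset V) :=
  S.filter fun U => ¬(x ∈ U ∧ y ∈ U) ∧ ¬(σ x ∈ U ∧ σ y ∈ U)

/-- `Sᵢ† = {K ⊆ V(Sᵢ) : |K| = k+1, {x,y} ⊆ K, K - x ∈ ∂Sᵢ, K - y ∈ ∂Sᵢ}`. -/
def fogDagger {V : Type*} [DecidableEq V] (k : ℕ) (Si : Multiset (Finset V))
    (x y : V) : Finset (Finset V) :=
  (complexVerts Si).powerset.filter fun K =>
    K.card = k + 1 ∧ x ∈ K ∧ y ∈ K ∧
      inBoundary k Si (K.erase x) ∧ inBoundary k Si (K.erase y)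

/-- `Sᵢ⁺ = Sᵢ ∪ Sᵢ† ∪ (Sᵢ†)*`. -/
def fogPlus {V : Type*} [DecidableEq V] (k : ℕ) (Si : Multiset (Finset V)) (x y : V)
    (σ : V → V) : Multiset (Finset V) :=
  Si ∪ (fogDagger k Si x y).val ∪ ((fogDagger k Si x y).image (Finset.image σ)).val

/-- The boundary complex `B_k` of the `(k+1)`-dimensional crosspolytope: its facets are
the transversals of the pairs `{(i,0),(i,1)}`. -/
def crossComplex (k : ℕ) : Multiset (Finset (Fin (k + 1) × Fin 2)) :=
  (Finset.univ : Finset (Fin (k + 1) → Fin 2)).val.map fun ε =>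
    Finset.univ.image fun i => (i, ε i)

/-- The graph `G(B_k)` of the `(k+1)`-dimensional crosspolytope: all pairs of vertices
are adjacent except antipodal ones. -/
def crossGraph (k : ℕ) : SimpleGraph (Fin (k + 1) × Fin 2) :=
  SimpleGraph.fromRel fun a b => a.1 ≠ b.1

/-- The antipodal vertex pairing of `G(B_k)`. -/
def antipode (k : ℕ) : Fin (k + 1) × Fin 2 → Fin (k + 1) × Fin 2 := fun a => (a.1, a.2 + 1)

/-- A `k`-pseudomanifold: a simplicial `k`-complex in which every `(k-1)`-face lies in
exactly two facets, and which is strongly connected. -/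
def IsPseudomanifold {V : Type*} [DecidableEq V] (k : ℕ)
    (S : Multiset (Finset V)) : Prop :=
  S.Nodup ∧ (∀ F ∈ S, F.card = k + 1) ∧
    (∀ F : Finset V, F.card = k → (∃ U ∈ S, F ⊆ U) →
      (S.countP fun U => F ⊆ U) = 2) ∧
    ∀ U ∈ S, ∀ W ∈ S,
      Relation.ReflTransGen (fun A B => A ∈ S ∧ B ∈ S ∧ (A ∩ B).card = k) U W

/-!
Let `C` be a component of `G(S) - X` and `T` the facets of `S` meeting `C`; the boundary of `T`
lies in `X`. If `T` is a cycle, irreducibility rules out `σ C = C` (then `T` would be a proper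
invariant subcycle), so `T + T*` is an invariant subcycle and hence equals `S`; a subcycle `T₀`
of `T` would likewise give `S = T₀ + T₀*`, so `T` is a circuit. Minimality of `X` gives
`X ⊆ V(T) ∩ V(T*)`: with `x, σ x` put back, any `a ∈ C` reaches `σ a`, and if `x ∉ V(T)` no such
walk can leave `C ∪ {σ x}`.

Otherwise a boundary face `K` of `T` is a `k`-subset of `X` with `K ∪ K* = X`, so `|X| = 2k`.
Since `∂∂T = 0`, `K` can be flipped at any `u ∈ K` to `K - u + σ u`, and the flipped faces make
any `x, y ∈ X` with `y ≠ σ x` adjacent: the graph induced on `X` is that of the crosspolytope.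
-/

namespace SimpleGraph

variable {V : Type*} {G : SimpleGraph V} {W : Set V} {u v w : V}

variable (G W) in
/-- Even a vertex outside `W` is reachable from itself. -/
def ReachableIn : V → V → Prop :=
  Relation.ReflTransGen fun u v => u ∈ W ∧ v ∈ W ∧ G.Adj u v

lemma ReachableIn.tail (h : G.ReachableIn W u v) (hv : v ∈ W) (hw : w ∈ W) (hvw : G.Adj v w) :
    G.ReachableIn W u w :=
  Relation.ReflTransGen.tail h ⟨hv, hw, hvw⟩

lemma ReachableIn.trans (huv : G.ReachableIn W u v) (hvw : G.ReachableIn W v w) :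
    G.ReachableIn W u w :=
  Relation.ReflTransGen.trans huv hvw

lemma ReachableIn.symm (h : G.ReachableIn W u v) : G.ReachableIn W v u := by
  induction h with
  | refl => exact .refl
  | tail _ hstep ih => exact Relation.ReflTransGen.head ⟨hstep.2.1, hstep.1, hstep.2.2.symm⟩ ih

lemma ReachableIn.mem (h : G.ReachableIn W u v) (hu : u ∈ W) : v ∈ W := by
  induction h with
  | refl => exact hu
  | tail _ hstep _ => exact hstep.2.1

lemma ReachableIn.mem_of_closed {P : Set V}
    (hP : ∀ u v, u ∈ P → u ∈ W → v ∈ W → G.Adj u v → v ∈ P)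
    (h : G.ReachableIn W u v) (hu : u ∈ P) : v ∈ P := by
  induction h with
  | refl => exact hu
  | tail _ hstep ih => exact hP _ _ ih hstep.1 hstep.2.1 hstep.2.2

lemma ReachableIn.map {f : V → V} (hf : Set.MapsTo f W W)
    (hadj : ∀ u ∈ W, ∀ v ∈ W, G.Adj u v → G.Adj (f u) (f v)) (h : G.ReachableIn W u v) :
    G.ReachableIn W (f u) (f v) :=
  Relation.ReflTransGen.lift f (fun _ _ ⟨hu, hv, huv⟩ => ⟨hf hu, hf hv, hadj _ hu _ hv huv⟩) _ _ h

lemma reachableIn_iff_reachable (hu : u ∈ W) (hv : v ∈ W) :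
    G.ReachableIn W u v ↔ (G.induce W).Reachable ⟨u, hu⟩ ⟨v, hv⟩ := by
  constructor
  · intro h
    induction h with
    | refl => rfl
    | tail _ hstep ih =>
      exact (ih hstep.1).trans (show (G.induce W).Adj ⟨_, hstep.1⟩ ⟨_, hv⟩ from hstep.2.2).reachable
  · intro h
    rw [reachable_iff_reflTransGen] at h
    exact Relation.ReflTransGen.lift Subtype.val (fun a b hab => ⟨a.2, b.2, hab⟩) _ _ h

lemma Connected.reachableIn (h : (G.induce W).Connected) (hu : u ∈ W) (hv : v ∈ W) :
    G.ReachableIn W u v :=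
  (reachableIn_iff_reachable hu hv).2 (h.preconnected _ _)

lemma exists_not_reachableIn (hW : W.Nonempty) (h : ¬(G.induce W).Connected) :
    ∃ u ∈ W, ∃ v ∈ W, ¬G.ReachableIn W u v := by
  by_contra! hc
  exact h ((connected_iff _).2
    ⟨fun a b => (reachableIn_iff_reachable a.2 b.2).1 (hc a a.2 b b.2), hW.to_subtype⟩)

lemma ReachableIn.apply_iff {f : V → V} (hf : ∀ {u v}, G.ReachableIn W u v →
    G.ReachableIn W (f u) (f v)) (ha : G.ReachableIn W u (f u)) (hw : f (f w) = w) :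
    G.ReachableIn W u (f w) ↔ G.ReachableIn W u w :=
  ⟨fun h => ha.trans (hw ▸ hf h), fun h => ha.trans (hf h)⟩

lemma not_reachableIn_apply {f : V → V} (hf : ∀ {u v}, G.ReachableIn W u v →
    G.ReachableIn W (f u) (f v)) (ha : ¬G.ReachableIn W u (f u)) (hw : G.ReachableIn W u w) :
    ¬G.ReachableIn W u (f w) :=
  fun hfw => ha (hfw.trans (hf hw).symm)

end SimpleGraph

lemma complexGraph_adj {V : Type*} {S : Multiset (Finset V)} {u v : V} :
    (complexGraph S).Adj u v ↔ u ≠ v ∧ ∃ F ∈ S, u ∈ F ∧ v ∈ F := by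
  constructor
  · rintro ⟨hne, ⟨F, hF, hu, hv⟩ | ⟨F, hF, hv, hu⟩⟩ <;> exact ⟨hne, F, hF, hu, hv⟩
  · rintro ⟨hne, huv⟩
    exact ⟨hne, Or.inl huv⟩

section Multicomplex

variable {V : Type*} [DecidableEq V] {k : ℕ} {S T : Multiset (Finset V)} {F K X : Finset V}
  {σ : V → V} {v : V}

lemma mem_complexVerts : v ∈ complexVerts S ↔ ∃ F ∈ S, v ∈ F := by
  simp [complexVerts, Finset.mem_sup]

lemma subset_complexVerts (hF : F ∈ S) : F ⊆ complexVerts S :=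
  fun _ hv => mem_complexVerts.2 ⟨F, hF, hv⟩

lemma inBoundary.exists_mem_subset (h : inBoundary k T K) : ∃ U ∈ T, K ⊆ U := by
  obtain ⟨-, hodd⟩ := h
  exact Multiset.countP_pos.1 (Nat.pos_of_ne_zero fun h0 => by simp [h0] at hodd)

lemma IsSimplicialCycle.add (hS : IsSimplicialCycle k S) (hT : IsSimplicialCycle k T) :
    IsSimplicialCycle k (S + T) := by
  refine ⟨fun F hF => (Multiset.mem_add.1 hF).elim (hS.1 F) (hT.1 F), fun K ⟨hK, hodd⟩ => ?_⟩
  have hSK := hS.2 K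
  have hTK := hT.2 K
  simp only [inBoundary, hK, true_and, Multiset.countP_add] at hSK hTK hodd
  omega

lemma sum_countP_insert_subset {A J : Finset V}
    (hT : ∀ U ∈ T, U ⊆ A ∧ U.card = J.card + 2) :
    ∑ w ∈ A \ J, T.countP (insert w J ⊆ ·) = 2 * T.countP (J ⊆ ·) := by
  induction T using Multiset.induction_on with
  | empty => simp
  | cons U T ih =>
    obtain ⟨hUA, hUcard⟩ := hT U (Multiset.mem_cons_self U T)
    have hU : ∑ w ∈ A \ J, (if insert w J ⊆ U then 1 else 0) = if J ⊆ U then 2 else 0 := by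
      rw [Finset.sum_boole, Nat.cast_id]
      split_ifs with hJU
      · have : (A \ J).filter (insert · J ⊆ U) = U \ J := by
          ext w
          simp only [Finset.mem_filter, Finset.mem_sdiff, Finset.insert_subset_iff, hJU, and_true]
          exact ⟨fun h => ⟨h.2, h.1.2⟩, fun h => ⟨⟨hUA h.1, h.2⟩, h.1⟩⟩
        rw [this, Finset.card_sdiff_of_subset hJU]
        omega
      · exact Finset.card_eq_zero.2 (Finset.filter_eq_empty_iff.2
          fun w _ h => hJU ((Finset.subset_insert w J).trans h))
    simp only [Multiset.countP_cons, Finset.sum_add_distrib, hU,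
      ih fun U' hU' => hT U' (Multiset.mem_cons_of_mem hU')]
    split_ifs <;> ring

/-- This is `∂∂ = 0`. -/
lemma even_card_inBoundary_insert {J : Finset V} (hT : IsMultiComplex k T)
    (hJ : J.card + 1 = k) :
    Even ((complexVerts T \ J).filter fun w => inBoundary k T (insert w J)).card := by
  have hsum := sum_countP_insert_subset (A := complexVerts T) (J := J) (T := T)
    fun U hU => ⟨subset_complexVerts hU, by rw [hT U hU]; omega⟩
  have hodd := (Finset.even_sum_iff_even_card_odd _).1 (hsum ▸ even_two_mul _)
  convert hodd using 2
  refine Finset.filter_congr fun w hw => ?_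
  rw [inBoundary, Finset.card_insert_of_notMem (Finset.mem_sdiff.1 hw).2, hJ, Nat.odd_iff]
  exact and_iff_right rfl

namespace IsFreeSimplicialInvolution

lemma image_mem (hσ : IsFreeSimplicialInvolution S σ) (hF : F ∈ S) : F.image σ ∈ S :=
  hσ.2.1 ▸ Multiset.mem_map_of_mem _ hF

lemma apply_apply (hσ : IsFreeSimplicialInvolution S σ) (hv : v ∈ complexVerts S) :
    σ (σ v) = v :=
  hσ.1 v hv

lemma apply_mem (hσ : IsFreeSimplicialInvolution S σ) (hv : v ∈ complexVerts S) :
    σ v ∈ complexVerts S := by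
  obtain ⟨F, hF, hvF⟩ := mem_complexVerts.1 hv
  exact mem_complexVerts.2 ⟨_, hσ.image_mem hF, Finset.mem_image_of_mem σ hvF⟩

lemma injOn (hσ : IsFreeSimplicialInvolution S σ) : Set.InjOn σ (complexVerts S) :=
  fun a ha b hb hab => by rw [← hσ.apply_apply ha, ← hσ.apply_apply hb, hab]

lemma apply_notMem (hσ : IsFreeSimplicialInvolution S σ) (hF : F ∈ S) (hv : v ∈ F) :
    σ v ∉ F := by
  intro hσv
  refine hσ.2.2 {v, σ v} (Finset.insert_nonempty _ _)
    ⟨F, hF, Finset.insert_subset hv (Finset.singleton_subset_iff.2 hσv)⟩ ?_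
  rw [Finset.image_insert, Finset.image_singleton, hσ.apply_apply (subset_complexVerts hF hv),
    Finset.pair_comm]

lemma disjoint_image (hσ : IsFreeSimplicialInvolution S σ) (hF : F ∈ S) (hKF : K ⊆ F) :
    Disjoint K (K.image σ) := by
  rw [Finset.disjoint_right]
  rintro _ hw hwK
  obtain ⟨v, hv, rfl⟩ := Finset.mem_image.1 hw
  exact hσ.apply_notMem hF (hKF hv) (hKF hwK)

lemma card_image (hσ : IsFreeSimplicialInvolution S σ) (hK : K ⊆ complexVerts S) :
    (K.image σ).card = K.card :=
  Finset.card_image_of_injOn (hσ.injOn.mono (Finset.coe_subset.2 hK))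

lemma image_image (hσ : IsFreeSimplicialInvolution S σ) (hK : K ⊆ complexVerts S) :
    (K.image σ).image σ = K := by
  rw [Finset.image_image]
  exact (Finset.image_congr fun v hv => hσ.apply_apply (hK hv)).trans Finset.image_id

lemma subset_image_iff (hσ : IsFreeSimplicialInvolution S σ) (hK : K ⊆ complexVerts S)
    (hF : F ⊆ complexVerts S) : K ⊆ F.image σ ↔ K.image σ ⊆ F := by
  constructor
  · intro h
    simpa only [hσ.image_image hF] using Finset.image_subset_image (f := σ) h
  · intro h
    rw [← hσ.image_image hK]
    exact Finset.image_subset_image h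

lemma card_union_image (hσ : IsFreeSimplicialInvolution S σ) (hF : F ∈ S) (hKF : K ⊆ F) :
    (K ∪ K.image σ).card = 2 * K.card := by
  rw [Finset.card_union_of_disjoint (hσ.disjoint_image hF hKF),
    hσ.card_image (hKF.trans (subset_complexVerts hF)), two_mul]

lemma two_mul_card_le (hσ : IsFreeSimplicialInvolution S σ) (hXσ : X.image σ = X)
    (hF : F ∈ S) (hKF : K ⊆ F) (hKX : K ⊆ X) : 2 * K.card ≤ X.card :=
  hσ.card_union_image hF hKF ▸
    Finset.card_le_card (Finset.union_subset hKX (hXσ ▸ Finset.image_subset_image hKX))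

lemma union_image_eq (hσ : IsFreeSimplicialInvolution S σ) (hXσ : X.image σ = X)
    (hF : F ∈ S) (hKF : K ⊆ F) (hKX : K ⊆ X) (hX : X.card ≤ 2 * K.card) :
    K ∪ K.image σ = X :=
  Finset.eq_of_subset_of_card_le
    (Finset.union_subset hKX (hXσ ▸ Finset.image_subset_image hKX))
    (hσ.card_union_image hF hKF ▸ hX)

lemma starM_starM (hσ : IsFreeSimplicialInvolution S σ) (hT : T ≤ S) :
    starM σ (starM σ T) = T := by
  rw [starM, starM, Multiset.map_map]
  conv_rhs => rw [← Multiset.map_id T]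
  exact Multiset.map_congr rfl fun F hF =>
    hσ.image_image (subset_complexVerts (Multiset.mem_of_le hT hF))

lemma isSimplicialCycle_starM (hσ : IsFreeSimplicialInvolution S σ) (hT : T ≤ S)
    (hc : IsSimplicialCycle k T) : IsSimplicialCycle k (starM σ T) := by
  have hTV : ∀ U ∈ T, U ⊆ complexVerts S := fun U hU =>
    subset_complexVerts (Multiset.mem_of_le hT hU)
  refine ⟨fun F hF => ?_, fun K hK => ?_⟩
  · obtain ⟨U, hU, rfl⟩ := Multiset.mem_map.1 hF
    rw [hσ.card_image (hTV U hU)]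
    exact hc.1 U hU
  · obtain ⟨_, hF, hKF⟩ := hK.exists_mem_subset
    obtain ⟨U, hU, rfl⟩ := Multiset.mem_map.1 hF
    have hKV : K ⊆ complexVerts S :=
      hKF.trans (subset_complexVerts (hσ.image_mem (Multiset.mem_of_le hT hU)))
    refine hc.2 (K.image σ) ⟨by rw [hσ.card_image hKV, hK.1], ?_⟩
    rw [← hK.2, starM, Multiset.countP_map, Multiset.countP_eq_card_filter]
    exact congrArg (· % 2) (congrArg Multiset.card (Multiset.filter_congr fun U hU =>
      (hσ.subset_image_iff hKV (hTV U hU)).symm))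

end IsFreeSimplicialInvolution

namespace IsZ2IrreducibleCycle

lemma eq_add_starM (h : IsZ2IrreducibleCycle k S σ) (hT : IsSimplicialCycle k T) (hT0 : T ≠ 0)
    (hle : T + starM σ T ≤ S) : S = T + starM σ T := by
  have hσ := h.1.2
  have hTS : T ≤ S := (Multiset.le_add_right T _).trans hle
  by_contra hne
  refine h.2.2 _ hle (by simp [hT0]) (Ne.symm hne) ?_ (hT.add (hσ.isSimplicialCycle_starM hTS hT))
  rw [starM, Multiset.map_add, ← starM, ← starM, hσ.starM_starM hTS, add_comm]

lemma isSimplicialCircuit_of_eq_add_starM (h : IsZ2IrreducibleCycle k S σ) (hS : S = T + starM σ T)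
    (hT : IsSimplicialCycle k T) : IsSimplicialCircuit k T := by
  refine ⟨hT, fun hT0 => h.2.1 (by simp [hS, hT0, starM]), fun T₀ hle hT₀ hne hc => ?_⟩
  have hS₀ := h.eq_add_starM hc hT₀ (hS ▸ add_le_add hle (Multiset.map_le_map hle))
  have hlt := Multiset.card_lt_card (lt_of_le_of_ne hle hne)
  have hcard := congrArg Multiset.card (hS.symm.trans hS₀)
  simp only [starM, Multiset.card_add, Multiset.card_map] at hcard
  omega

end IsZ2IrreducibleCycle

end Multicomplex

section Components

variable {V : Type*} {S : Multiset (Finset V)} {X : Finset V} {C D : Set V}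

open scoped Classical

noncomputable def facetsMeeting (S : Multiset (Finset V)) (C : Set V) : Multiset (Finset V) :=
  S.filter fun F => ∃ v ∈ F, v ∈ C

lemma mem_facetsMeeting {F : Finset V} : F ∈ facetsMeeting S C ↔ F ∈ S ∧ ∃ v ∈ F, v ∈ C :=
  Multiset.mem_filter

lemma facetsMeeting_le : facetsMeeting S C ≤ S :=
  Multiset.filter_le _ _

/-- For `C ⊆ V(S) ∖ X` this says that `C` is a union of vertex sets of components of
`G(S) - X`. -/
def IsSaturated (S : Multiset (Finset V)) (X : Finset V) (C : Set V) : Prop :=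
  ∀ F ∈ S, ∀ u ∈ F, ∀ v ∈ F, u ∈ C → v ∉ X → v ∈ C

lemma IsSaturated.facetsMeeting_add_le (hC : IsSaturated S X C) (hDX : ∀ v ∈ D, v ∉ X)
    (hCD : ∀ v ∈ C, v ∉ D) : facetsMeeting S C + facetsMeeting S D ≤ S := by
  have hboth : S.filter (fun F => (∃ u ∈ F, u ∈ C) ∧ ∃ v ∈ F, v ∈ D) = 0 := by
    refine Multiset.filter_eq_nil.2 ?_
    rintro F hF ⟨⟨u, hu, huC⟩, v, hv, hvD⟩
    exact hCD v (hC F hF u hu v hv huC (hDX v hvD)) hvD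
  rw [facetsMeeting, facetsMeeting, Multiset.filter_add_filter, hboth, add_zero]
  exact Multiset.filter_le _ _

end Components

section SaturatedComponents

variable {V : Type*} [DecidableEq V] {k : ℕ} {S : Multiset (Finset V)} {X : Finset V}
  {C D : Set V} {σ : V → V} {a b v x : V}

open scoped Classical

lemma facetsMeeting_ne_zero (ha : a ∈ C) (haS : a ∈ complexVerts S) :
    facetsMeeting S C ≠ 0 := by
  obtain ⟨F, hF, haF⟩ := mem_complexVerts.1 haS
  exact fun h0 => Multiset.notMem_zero F (h0 ▸ mem_facetsMeeting.2 ⟨hF, a, haF, ha⟩)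

lemma facetsMeeting_congr (h : ∀ v ∈ complexVerts S, v ∈ C ↔ v ∈ D) :
    facetsMeeting S C = facetsMeeting S D :=
  Multiset.filter_congr fun _ hF => exists_congr fun v =>
    and_congr_right fun hv => h v (subset_complexVerts hF hv)

lemma IsFreeSimplicialInvolution.starM_facetsMeeting (hσ : IsFreeSimplicialInvolution S σ) :
    starM σ (facetsMeeting S C) = facetsMeeting S (σ ⁻¹' C) := by
  conv_rhs => rw [facetsMeeting, ← hσ.2.1, starM, Multiset.filter_map]
  refine congrArg (Multiset.map _) (Multiset.filter_congr fun F hF => ?_)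
  simp only [Function.comp, Finset.exists_mem_image, Set.mem_preimage]
  exact exists_congr fun v => and_congr_right fun hv => by
    rw [hσ.apply_apply (subset_complexVerts hF hv)]

lemma apply_mem_complexVerts_starM {T : Multiset (Finset V)} (hv : v ∈ complexVerts T) :
    σ v ∈ complexVerts (starM σ T) := by
  obtain ⟨F, hF, hvF⟩ := mem_complexVerts.1 hv
  exact mem_complexVerts.2 ⟨_, Multiset.mem_map_of_mem _ hF, Finset.mem_image_of_mem σ hvF⟩

lemma isSaturated_setOf_reachableIn (ha : a ∈ (↑(complexVerts S) \ ↑X : Set V)) :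
    IsSaturated S X {w | (complexGraph S).ReachableIn (↑(complexVerts S) \ ↑X) a w} := by
  intro F hF u hu v hv huC hvX
  by_cases huv : u = v
  · exact huv ▸ huC
  · exact huC.tail (huC.mem ha) ⟨subset_complexVerts hF hv, hvX⟩
      (complexGraph_adj.2 ⟨huv, F, hF, hu, hv⟩)

namespace IsSaturated

lemma mem_of_mem_complexVerts (hC : IsSaturated S X C)
    (hv : v ∈ complexVerts (facetsMeeting S C)) (hvX : v ∉ X) : v ∈ C := by
  obtain ⟨F, hF, hvF⟩ := mem_complexVerts.1 hv
  obtain ⟨hFS, u, huF, huC⟩ := mem_facetsMeeting.1 hF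
  exact hC F hFS u huF v hvF huC hvX

lemma facetsMeeting_ne (hC : IsSaturated S X C) (hb : b ∈ complexVerts S) (hbX : b ∉ X)
    (hbC : b ∉ C) : facetsMeeting S C ≠ S :=
  fun hT => hbC (hC.mem_of_mem_complexVerts (by rwa [hT]) hbX)

lemma subset_of_inBoundary (hC : IsSaturated S X C) (hS : IsSimplicialCycle k S) {K : Finset V}
    (hK : inBoundary k (facetsMeeting S C) K) : K ⊆ X := by
  intro x hxK
  by_contra hxX
  obtain ⟨hKc, hodd⟩ := hK
  by_cases hxC : x ∈ C
  · refine hS.2 K ⟨hKc, ?_⟩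
    rwa [facetsMeeting, Multiset.countP_filter,
      Multiset.countP_congr rfl fun U _ =>
        propext (and_iff_left_of_imp fun hKU => ⟨x, hKU hxK, hxC⟩)]
      at hodd
  · rw [Multiset.countP_eq_zero.2 fun U hU hKU => ?_] at hodd
    · exact absurd hodd (by decide)
    obtain ⟨hUS, u, huU, huC⟩ := mem_facetsMeeting.1 hU
    exact hxC (hC U hUS u huU x (hKU hxK) huC hxX)

lemma preimage (hC : IsSaturated S X C) (hσ : IsFreeSimplicialInvolution S σ)
    (hXσ : X.image σ = X) : IsSaturated S X (σ ⁻¹' C) := by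
  intro F hF u hu v hv huC hvX
  refine hC _ (hσ.image_mem hF) _ (Finset.mem_image_of_mem σ hu) _ (Finset.mem_image_of_mem σ hv)
    huC fun hσv => hvX ?_
  rw [← hσ.apply_apply (subset_complexVerts hF hv), ← hXσ]
  exact Finset.mem_image_of_mem σ hσv

/-- A walk from `C` avoiding `X \ {x, σ x}` can leave `C` only through `x` or `σ x`; if `x` is
not a vertex of the facets meeting `C`, it is never reached, and `σ x` is a dead end. -/
lemma mem_complexVerts_facetsMeeting (hC : IsSaturated S X C)
    (hσ : IsFreeSimplicialInvolution S σ)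
    (hS : S = facetsMeeting S C + starM σ (facetsMeeting S C)) (hx : x ∈ X)
    (hxS : x ∈ complexVerts S) (hCW : C ⊆ ↑(complexVerts S) \ ↑X) (ha : a ∈ C) (hσa : σ a ∉ C)
    (hreach : (complexGraph S).ReachableIn (↑(complexVerts S) \ ↑(X \ {x, σ x})) a (σ a)) :
    x ∈ complexVerts (facetsMeeting S C) := by
  by_contra hxT
  have hclosed : ∀ u v, u ∈ C ∪ {σ x} → u ∈ (↑(complexVerts S) \ ↑(X \ {x, σ x}) : Set V) →
      v ∈ (↑(complexVerts S) \ ↑(X \ {x, σ x}) : Set V) → (complexGraph S).Adj u v →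
      v ∈ C ∪ {σ x} := by
    rintro u v hu - hv huv
    obtain ⟨-, F, hF, huF, hvF⟩ := complexGraph_adj.1 huv
    have hFT : F ∈ facetsMeeting S C := by
      rcases hu with huC | rfl
      · exact mem_facetsMeeting.2 ⟨hF, u, huF, huC⟩
      · refine (Multiset.mem_add.1 (hS ▸ hF)).resolve_right fun hFT => hxT ?_
        obtain ⟨G, hG, rfl⟩ := Multiset.mem_map.1 hFT
        obtain ⟨y, hy, hyx⟩ := Finset.mem_image.1 huF
        have hyS := subset_complexVerts (Multiset.mem_of_le facetsMeeting_le hG) hy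
        exact mem_complexVerts.2 ⟨G, hG, hσ.injOn hyS hxS hyx ▸ hy⟩
    by_cases hvX : v ∈ X
    · have hvx : v = x ∨ v = σ x := by
        by_contra! hne
        exact hv.2 (Finset.mem_coe.2 (Finset.mem_sdiff.2 ⟨hvX, by simp [hne.1, hne.2]⟩))
      rcases hvx with rfl | rfl
      · exact absurd (mem_complexVerts.2 ⟨F, hFT, hvF⟩) hxT
      · exact Or.inr rfl
    · obtain ⟨-, w, hw, hwC⟩ := mem_facetsMeeting.1 hFT
      exact Or.inl (hC F hF w hw v hvF hwC hvX)
  rcases hreach.mem_of_closed hclosed (Or.inl ha) with hσaC | hσax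
  · exact hσa hσaC
  · exact (hCW ha).2 (hσ.injOn (hCW ha).1 hxS hσax ▸ hx)

end IsSaturated

lemma IsFreeSimplicialInvolution.mapsTo_sdiff (hσ : IsFreeSimplicialInvolution S σ)
    (hXσ : X.image σ = X) :
    Set.MapsTo σ (↑(complexVerts S) \ ↑X) (↑(complexVerts S) \ ↑X) := by
  rintro v ⟨hvS, hvX⟩
  refine ⟨hσ.apply_mem hvS, fun hσv => hvX ?_⟩
  rw [← hσ.apply_apply hvS, ← hXσ]
  exact Finset.mem_image_of_mem σ hσv

lemma IsFreeSimplicialInvolution.adj_apply (hσ : IsFreeSimplicialInvolution S σ) {u v : V}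
    (huv : (complexGraph S).Adj u v) : (complexGraph S).Adj (σ u) (σ v) := by
  obtain ⟨hne, F, hF, hu, hv⟩ := complexGraph_adj.1 huv
  exact complexGraph_adj.2 ⟨fun h => hne (hσ.injOn (subset_complexVerts hF hu)
    (subset_complexVerts hF hv) h), _, hσ.image_mem hF, Finset.mem_image_of_mem σ hu,
    Finset.mem_image_of_mem σ hv⟩

lemma IsFreeSimplicialInvolution.image_sdiff_pair (hσ : IsFreeSimplicialInvolution S σ)
    (hXS : X ⊆ complexVerts S) (hXσ : X.image σ = X) (hx : x ∈ X) :
    (X \ {x, σ x}).image σ = X \ {x, σ x} := by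
  have hpair : {x, σ x} ⊆ X :=
    Finset.insert_subset hx (Finset.singleton_subset_iff.2 (hXσ ▸ Finset.mem_image_of_mem σ hx))
  rw [Finset.image_sdiff_of_injOn (hσ.injOn.mono (Finset.coe_subset.2 hXS)) hpair, hXσ,
    Finset.image_insert, Finset.image_singleton, hσ.apply_apply (hXS hx), Finset.pair_comm]

end SaturatedComponents

section Crosspolytope

variable {V : Type*} [DecidableEq V] {k : ℕ} {T : Multiset (Finset V)} {X K : Finset V}
  {σ : V → V}

/-- Of the boundary faces `J ∪ {w}` through `J = K - u`, an even number by `∂∂ = 0`, only those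
with `w = u` and `w = σ u` can be transversals of the pairs `{x, σ x}` of `X`. -/
lemma inBoundary_insert_apply_erase (hT : IsMultiComplex k T)
    (htrans : ∀ L, inBoundary k T L → L ∪ L.image σ = X ∧ Disjoint L (L.image σ))
    (hK : inBoundary k T K) {u : V} (hu : u ∈ K) :
    inBoundary k T (insert (σ u) (K.erase u)) := by
  set O := (complexVerts T \ K.erase u).filter fun w => inBoundary k T (insert w (K.erase u))
    with hO
  have hOeven : Even O.card :=
    even_card_inBoundary_insert hT (by rw [Finset.card_erase_add_one hu, hK.1])
  have huO : u ∈ O := by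
    obtain ⟨U, hU, hKU⟩ := hK.exists_mem_subset
    rw [hO, Finset.mem_filter, Finset.mem_sdiff, Finset.insert_erase hu]
    exact ⟨⟨subset_complexVerts hU (hKU hu), Finset.notMem_erase u K⟩, hK⟩
  have hOsub : ∀ w ∈ O, w = u ∨ w = σ u := by
    intro w hw
    rw [hO, Finset.mem_filter, Finset.mem_sdiff] at hw
    obtain ⟨⟨-, hwJ⟩, hwbd⟩ := hw
    obtain ⟨hLX, hLdisj⟩ := htrans _ hwbd
    have hwX : w ∈ X := hLX ▸ Finset.mem_union_left _ (Finset.mem_insert_self w _)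
    rw [← (htrans K hK).1, ← Finset.insert_erase hu, Finset.image_insert] at hwX
    simp only [Finset.mem_union, Finset.mem_insert] at hwX
    rcases hwX with (rfl | hwJ') | (rfl | hwσJ)
    · exact Or.inl rfl
    · exact absurd hwJ' hwJ
    · exact Or.inr rfl
    · exact absurd (Finset.image_subset_image (Finset.subset_insert w _) hwσJ)
        (Finset.disjoint_left.1 hLdisj (Finset.mem_insert_self w _))
  have hσuO : σ u ∈ O := by
    by_contra hσuO
    have hOu : O = {u} := Finset.eq_singleton_iff_unique_mem.2
      ⟨huO, fun w hw => (hOsub w hw).resolve_right fun h => hσuO (h ▸ hw)⟩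
    rw [hOu, Finset.card_singleton] at hOeven
    exact Nat.not_even_one hOeven
  exact (Finset.mem_filter.1 hσuO).2

lemma exists_mem_of_flip {P : Finset V → Prop} (hX : ∀ K, P K → K ∪ K.image σ = X)
    (hflip : ∀ K, P K → ∀ u ∈ K, P (insert (σ u) (K.erase u))) (hσ : ∀ x ∈ X, σ (σ x) = x)
    (hK : P K) {z : V} (hz : z ∈ X) : ∃ K', P K' ∧ z ∈ K' ∧ ∀ w ∈ K, w ≠ σ z → w ∈ K' := by
  by_cases hzK : z ∈ K
  · exact ⟨K, hK, hzK, fun w hw _ => hw⟩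
  obtain ⟨v, hv, rfl⟩ : ∃ v ∈ K, σ v = z := by
    rw [← hX K hK, Finset.mem_union, Finset.mem_image] at hz
    exact hz.resolve_left hzK
  refine ⟨_, hflip K hK v hv, Finset.mem_insert_self _ _, fun w hw hwv => ?_⟩
  rw [hσ v (hX K hK ▸ Finset.mem_union_left _ hv)] at hwv
  exact Finset.mem_insert_of_mem (Finset.mem_erase.2 ⟨hwv, hw⟩)

lemma exists_mem_mem_of_flip {P : Finset V → Prop} (hX : ∀ K, P K → K ∪ K.image σ = X)
    (hflip : ∀ K, P K → ∀ u ∈ K, P (insert (σ u) (K.erase u))) (hσ : ∀ x ∈ X, σ (σ x) = x)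
    (hK : P K) {x y : V} (hx : x ∈ X) (hy : y ∈ X) (hxy : y ≠ σ x) :
    ∃ K, P K ∧ x ∈ K ∧ y ∈ K := by
  obtain ⟨K₁, hK₁, hxK₁, -⟩ := exists_mem_of_flip hX hflip hσ hK hx
  obtain ⟨K₂, hK₂, hyK₂, hK₁₂⟩ := exists_mem_of_flip hX hflip hσ hK₁ hy
  exact ⟨K₂, hK₂, hK₁₂ x hxK₁ fun h => hxy (by rw [h, hσ y hy]), hyK₂⟩

lemma crossGraph_adj {n : ℕ} {p q : Fin (n + 1) × Fin 2} :
    (crossGraph n).Adj p q ↔ p.1 ≠ q.1 := by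
  rw [crossGraph, SimpleGraph.fromRel_adj]
  exact ⟨fun h => h.2.elim id Ne.symm, fun h => ⟨fun hpq => h (congrArg Prod.fst hpq), Or.inl h⟩⟩

lemma nonempty_induce_iso_crossGraph {G : SimpleGraph V} {n : ℕ} (hK : K.card = n + 1)
    (hKX : K ∪ K.image σ = X) (hdisj : Disjoint K (K.image σ)) (hσ : ∀ x ∈ K, σ (σ x) = x)
    (hadj : ∀ x ∈ X, ∀ y ∈ X, G.Adj x y ↔ y ≠ x ∧ y ≠ σ x) :
    Nonempty (G.induce (X : Set V) ≃g crossGraph n) := by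
  let e : Fin (n + 1) ≃ K := (Finset.equivFinOfCardEq hK).symm
  let f : Fin (n + 1) × Fin 2 → V := fun p => if p.2 = 0 then e p.1 else σ (e p.1)
  have hfX : ∀ p, f p ∈ X := by
    rintro ⟨i, t⟩
    rw [← hKX]
    fin_cases t
    · exact Finset.mem_union_left _ (e i).2
    · exact Finset.mem_union_right _ (Finset.mem_image_of_mem σ (e i).2)
  have hfσ : ∀ i t, σ (f (i, t)) = f (i, t + 1) := by
    intro i t
    fin_cases t
    · simp [f]
    · simp [f, hσ _ (e i).2]
  have hfinj : Function.Injective f := by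
    have he : ∀ i j, (e i : V) = e j → i = j := fun i j h => e.injective (Subtype.ext h)
    have hdis : ∀ i j, (e i : V) ≠ σ (e j) := fun i j h =>
      Finset.disjoint_left.1 hdisj (e i).2 (h ▸ Finset.mem_image_of_mem σ (e j).2)
    rintro ⟨i, s⟩ ⟨j, t⟩ hij
    fin_cases s <;> fin_cases t <;> simp only [f] at hij <;> simp
    · exact he _ _ hij
    · exact hdis _ _ hij
    · exact hdis _ _ hij.symm
    · exact he _ _ (by simpa [hσ _ (e i).2, hσ _ (e j).2] using congrArg σ hij)
  have hfsurj : ∀ x ∈ X, ∃ p, f p = x := by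
    intro x hx
    rw [← hKX, Finset.mem_union, Finset.mem_image] at hx
    rcases hx with hxK | ⟨y, hy, rfl⟩
    · exact ⟨(e.symm ⟨x, hxK⟩, 0), by simp [f]⟩
    · exact ⟨(e.symm ⟨y, hy⟩, 1), by simp [f]⟩
  let φ : Fin (n + 1) × Fin 2 ≃ (X : Set V) := Equiv.ofBijective (fun p => ⟨f p, hfX p⟩)
    ⟨fun p q h => hfinj (congrArg Subtype.val h),
      fun x => (hfsurj x x.2).imp fun _ hp => Subtype.ext hp⟩
  refine ⟨(RelIso.mk φ ?_).symm⟩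
  rintro ⟨i, s⟩ ⟨j, t⟩
  change G.Adj (f (i, s)) (f (j, t)) ↔ _
  rw [hadj _ (hfX _) _ (hfX _), hfσ, hfinj.ne_iff, hfinj.ne_iff, crossGraph_adj]
  fin_cases s <;> fin_cases t <;> simp [eq_comm]

end Crosspolytope

section Separators

variable {V : Type*} [DecidableEq V] {k : ℕ} {S T : Multiset (Finset V)} {X K₀ : Finset V}
  {C : Set V} {σ : V → V} {a : V}

lemma IsZ2IrreducibleCycle.nonempty_sdiff (h : IsZ2IrreducibleCycle k S σ)
    (hXσ : X.image σ = X) (hX : X.card ≤ 2 * k) :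
    (↑(complexVerts S) \ ↑X : Set V).Nonempty := by
  obtain ⟨F, hF⟩ := Multiset.exists_mem_of_ne_zero h.2.1
  obtain ⟨v, hvF, hvX⟩ : ∃ v ∈ F, v ∉ X := by
    by_contra! hFX
    have hFX := h.1.2.two_mul_card_le hXσ hF subset_rfl hFX
    rw [h.1.1.1 F hF] at hFX
    omega
  exact ⟨v, subset_complexVerts hF hvF, hvX⟩

theorem IsFreeSimplicialInvolution.card_eq_and_nonempty_iso_crossGraph
    (hσ : IsFreeSimplicialInvolution S σ) (hXS : X ⊆ complexVerts S) (hXσ : X.image σ = X)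
    (hX : X.card ≤ 2 * k) (hk : 1 ≤ k) (hTS : T ≤ S) (hT : IsMultiComplex k T)
    (hbd : ∀ K, inBoundary k T K → K ⊆ X) (hK₀ : inBoundary k T K₀) :
    X.card = 2 * k ∧ Nonempty ((complexGraph S).induce (X : Set V) ≃g crossGraph (k - 1)) := by
  have htrans : ∀ K, inBoundary k T K → K ∪ K.image σ = X ∧ Disjoint K (K.image σ) := by
    intro K hK
    obtain ⟨U, hU, hKU⟩ := hK.exists_mem_subset
    have hUS := Multiset.mem_of_le hTS hU
    exact ⟨hσ.union_image_eq hXσ hUS hKU (hbd K hK) (hK.1 ▸ hX), hσ.disjoint_image hUS hKU⟩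
  have hX2k : X.card = 2 * k := by
    obtain ⟨U, hU, hKU⟩ := hK₀.exists_mem_subset
    rw [← (htrans K₀ hK₀).1, hσ.card_union_image (Multiset.mem_of_le hTS hU) hKU, hK₀.1]
  have hσσ : ∀ x ∈ X, σ (σ x) = x := fun x hx => hσ.apply_apply (hXS hx)
  have hadj : ∀ x ∈ X, ∀ y ∈ X, (complexGraph S).Adj x y ↔ y ≠ x ∧ y ≠ σ x := by
    intro x hx y hy
    refine ⟨fun hxy => ?_, fun ⟨hyx, hyσx⟩ => ?_⟩
    · obtain ⟨hne, F, hF, hxF, hyF⟩ := complexGraph_adj.1 hxy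
      exact ⟨Ne.symm hne, fun h => hσ.apply_notMem hF hxF (h ▸ hyF)⟩
    · obtain ⟨K, hK, hxK, hyK⟩ := exists_mem_mem_of_flip (fun K hK => (htrans K hK).1)
        (fun K hK u hu => inBoundary_insert_apply_erase hT htrans hK hu) hσσ hK₀ hx hy hyσx
      obtain ⟨U, hU, hKU⟩ := hK.exists_mem_subset
      exact complexGraph_adj.2 ⟨Ne.symm hyx, U, Multiset.mem_of_le hTS hU, hKU hxK, hKU hyK⟩
  refine ⟨hX2k, nonempty_induce_iso_crossGraph (by rw [hK₀.1]; omega) (htrans K₀ hK₀).1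
    (htrans K₀ hK₀).2 (fun x hx => hσσ x ((htrans K₀ hK₀).1 ▸ Finset.mem_union_left _ hx)) hadj⟩

theorem IsZ2IrreducibleCycle.exists_circuit_add_starM (h : IsZ2IrreducibleCycle k S σ)
    (hXS : X ⊆ complexVerts S) (hXσ : X.image σ = X)
    (hmin : ∀ Y : Finset V, Y ⊆ X → Y ≠ X → Y.image σ = Y →
      ((complexGraph S).induce ((↑(complexVerts S) : Set V) \ ↑Y)).Connected)
    (hC : IsSaturated S X C) (hCW : C ⊆ ↑(complexVerts S) \ ↑X) (ha : a ∈ C)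
    (hCσ : ∀ c ∈ C, σ c ∉ C) (hT : IsSimplicialCycle k (facetsMeeting S C)) :
    ∃ T, IsSimplicialCircuit k T ∧ S = T + starM σ T ∧
      complexVerts T ∩ complexVerts (starM σ T) = X := by
  have hσ := h.1.2
  have hS : S = facetsMeeting S C + starM σ (facetsMeeting S C) := by
    refine h.eq_add_starM hT (facetsMeeting_ne_zero ha (hCW ha).1) ?_
    rw [hσ.starM_facetsMeeting]
    exact hC.facetsMeeting_add_le
      (fun v hv hvX => (hCW hv).2 (hXσ ▸ Finset.mem_image_of_mem σ hvX)) hCσ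
  have hXT : ∀ x ∈ X, x ∈ complexVerts (facetsMeeting S C) := by
    intro x hx
    have hconn := hmin _ Finset.sdiff_subset (fun hY => by rw [← hY] at hx; simp at hx)
      (hσ.image_sdiff_pair hXS hXσ hx)
    have hW : (↑(complexVerts S) \ ↑X : Set V) ⊆ ↑(complexVerts S) \ ↑(X \ {x, σ x}) :=
      Set.sdiff_subset_sdiff_right (Finset.coe_subset.2 Finset.sdiff_subset)
    exact hC.mem_complexVerts_facetsMeeting hσ hS hx (hXS hx) hCW ha (hCσ a ha)
      (hconn.reachableIn (hW (hCW ha)) (hW (hσ.mapsTo_sdiff hXσ (hCW ha))))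
  refine ⟨_, h.isSimplicialCircuit_of_eq_add_starM hS hT, hS,
    Finset.Subset.antisymm (fun w hw => ?_) fun x hx => ?_⟩
  · obtain ⟨hwT, hwT'⟩ := Finset.mem_inter.1 hw
    rw [hσ.starM_facetsMeeting] at hwT'
    by_contra hwX
    exact hCσ w (hC.mem_of_mem_complexVerts hwT hwX)
      ((hC.preimage hσ hXσ).mem_of_mem_complexVerts hwT' hwX)
  · refine Finset.mem_inter.2 ⟨hXT x hx, ?_⟩
    rw [← hσ.apply_apply (hXS hx)]
    exact apply_mem_complexVerts_starM (hXT _ (hXσ ▸ Finset.mem_image_of_mem σ hx))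

end Separators

/-- Small symmetric separators of `ℤ₂`-irreducible `k`-cycles. -/
theorem statement11 {V : Type*} [DecidableEq V] (k : ℕ) (hk : 2 ≤ k)
    (S : Multiset (Finset V)) (σ : V → V) (h : IsZ2IrreducibleCycle k S σ)
    (X : Finset V) (hXsub : ↑X ⊆ (↑(complexVerts S) : Set V)) (hXinv : X.image σ = X)
    (hsep : ¬ ((complexGraph S).induce ((↑(complexVerts S) : Set V) \ ↑X)).Connected)
    (hmin : ∀ Y : Finset V, Y ⊆ X → Y ≠ X → Y.image σ = Y →
      ((complexGraph S).induce ((↑(complexVerts S) : Set V) \ ↑Y)).Connected)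
    (hXcard : X.card ≤ 2 * k) :
    (∃ T : Multiset (Finset V), IsSimplicialCircuit k T ∧ S = T + starM σ T ∧
        complexVerts T ∩ complexVerts (starM σ T) = X) ∨
      (X.card = 2 * k ∧
        Nonempty ((complexGraph S).induce (↑X : Set V) ≃g crossGraph (k - 1))) := by
  have hS := h.1.1
  have hσ := h.1.2
  have hXS : X ⊆ complexVerts S := Finset.coe_subset.1 hXsub
  set W : Set V := ↑(complexVerts S) \ ↑X
  obtain ⟨a, ha, b, hb, hab⟩ :=
    SimpleGraph.exists_not_reachableIn (h.nonempty_sdiff hXinv hXcard) hsep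
  set C := {w | (complexGraph S).ReachableIn W a w}
  have hC : IsSaturated S X C := isSaturated_setOf_reachableIn ha
  have hσC : ∀ {u v}, (complexGraph S).ReachableIn W u v →
      (complexGraph S).ReachableIn W (σ u) (σ v) :=
    fun huv => huv.map (hσ.mapsTo_sdiff hXinv) fun _ _ _ _ => hσ.adj_apply
  have hTS : facetsMeeting S C ≤ S := facetsMeeting_le
  by_cases hT : IsSimplicialCycle k (facetsMeeting S C)
  · by_cases hσa : σ a ∈ C
    · refine absurd hT (h.2.2 _ hTS (facetsMeeting_ne_zero .refl ha.1)
        (hC.facetsMeeting_ne hb.1 hb.2 hab) ?_)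
      rw [hσ.starM_facetsMeeting]
      exact facetsMeeting_congr fun v hv => hσa.apply_iff hσC (hσ.apply_apply hv)
    · exact Or.inl (h.exists_circuit_add_starM hXS hXinv hmin hC (fun _ hw => hw.mem ha) .refl
        (fun _ hc => SimpleGraph.not_reachableIn_apply hσC hσa hc) hT)
  · have hTk : IsMultiComplex k (facetsMeeting S C) :=
      fun F hF => hS.1 F (Multiset.mem_of_le hTS hF)
    obtain ⟨K₀, hK₀⟩ : ∃ K, inBoundary k (facetsMeeting S C) K := by
      by_contra! hK
      exact hT ⟨hTk, hK⟩
    exact Or.inr (hσ.card_eq_and_nonempty_iso_crossGraph hXS hXinv hXcard (by omega) hTS hTk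
      (fun K hK => hC.subset_of_inBoundary hS hK) hK₀)
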